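/- arXiv:1405.1653 — 4 statements merged into one kernel-verified Lean document; each statement's English description precedes it below -/
import Mathlib

section
/- For a finite sequence X = (x^(1),...,x^(n)) of points in [0,1)^d, the L2-star discrepancy satisfies Warnock's formula: (d*_2(X))^2 = 3^{-d} - (2^{1-d}/n) * Σ_{i=1}^n Π_{k=1}^d (1 - (x^(i)_k)^2) + (1/n^2) * Σ_{i=1}^n Σ_{j=1}^n Π_{k=1}^d min{1 - x^(i)_k, 1 - x^(j)_k}. -/
open MeasureTheory Set

/-!
Expanding the square splits the integral into three sums of integrals of products
`∏ₖ f (y k)`: since `x⁽ⁱ⁾ ∈ [0, y)` iff `x⁽ⁱ⁾ₖ < y k` for all `k`, the counting term is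
`∏ₖ 1_{(x⁽ⁱ⁾ₖ, ∞)}(y k)`. By Fubini each such integral over the unit cube factors into
one-dimensional integrals over `[0, 1]`, namely `∫ t² = 1/3`, `∫_{a}^{1} t dt = (1 - a²)/2` and
`∫_{max a b}^{1} 1 dt = min (1 - a) (1 - b)`.
-/

section Pi

variable {ι : Type*} [Fintype ι]

theorem setIntegral_Icc_pi_prod (f : ι → ℝ → ℝ) (a b : ι → ℝ) :
    ∫ y in Icc a b, ∏ k, f k (y k) = ∏ k, ∫ t in Icc (a k) (b k), f k t := by
  rw [← pi_univ_Icc, volume_pi, Measure.restrict_pi_pi]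
  exact integral_fintype_prod_eq_prod f

theorem integrableOn_Icc_pi_prod {f : ι → ℝ → ℝ} {a b : ι → ℝ}
    (hf : ∀ k, IntegrableOn (f k) (Icc (a k) (b k))) :
    IntegrableOn (fun y => ∏ k, f k (y k)) (Icc a b) := by
  rw [IntegrableOn, ← pi_univ_Icc, volume_pi, Measure.restrict_pi_pi]
  exact Integrable.fintype_prod hf

theorem integrableOn_Icc_pi_prod_mul {f g : ι → ℝ → ℝ} {a b : ι → ℝ}
    (h : ∀ k, IntegrableOn (fun t => f k t * g k t) (Icc (a k) (b k))) :
    IntegrableOn (fun y => (∏ k, f k (y k)) * ∏ k, g k (y k)) (Icc a b) := by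
  simpa only [← Finset.prod_mul_distrib] using integrableOn_Icc_pi_prod h

theorem setIntegral_Icc_pi_prod_mul (f g : ι → ℝ → ℝ) (a b : ι → ℝ) :
    ∫ y in Icc a b, (∏ k, f k (y k)) * ∏ k, g k (y k)
      = ∏ k, ∫ t in Icc (a k) (b k), f k t * g k t := by
  simpa only [← Finset.prod_mul_distrib] using
    setIntegral_Icc_pi_prod (fun k t => f k t * g k t) a b

end Pi

theorem integral_sub_mul_sum_sq {α ι : Type*} [MeasurableSpace α] {μ : Measure α} [Fintype ι]
    {P : α → ℝ} {Q : ι → α → ℝ} (c : ℝ) (hPP : Integrable (fun a => P a * P a) μ)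
    (hPQ : ∀ i, Integrable (fun a => P a * Q i a) μ)
    (hQQ : ∀ i j, Integrable (fun a => Q i a * Q j a) μ) :
    ∫ a, (P a - c * ∑ i, Q i a) ^ 2 ∂μ
      = ∫ a, P a * P a ∂μ - 2 * c * ∑ i, ∫ a, P a * Q i a ∂μ
        + c ^ 2 * ∑ i, ∑ j, ∫ a, Q i a * Q j a ∂μ := by
  have hsq : ∀ a, (P a - c * ∑ i, Q i a) ^ 2
      = P a * P a - 2 * c * ∑ i, P a * Q i a + c ^ 2 * ∑ i, ∑ j, Q i a * Q j a := by
    intro a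
    rw [← Finset.mul_sum, ← Finset.sum_mul_sum]
    ring
  have hPQ_sum : Integrable (fun a => 2 * c * ∑ i, P a * Q i a) μ :=
    (integrable_finsetSum _ fun i _ => hPQ i).const_mul _
  have hQQ_sum (i : ι) : Integrable (fun a => ∑ j, Q i a * Q j a) μ :=
    integrable_finsetSum _ fun j _ => hQQ i j
  have hQQ_sum₂ : Integrable (fun a => c ^ 2 * ∑ i, ∑ j, Q i a * Q j a) μ :=
    (integrable_finsetSum _ fun i _ => hQQ_sum i).const_mul _
  have hdiff : Integrable (fun a => P a * P a - 2 * c * ∑ i, P a * Q i a) μ :=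
    hPP.sub hPQ_sum
  simp_rw [hsq]
  rw [integral_add hdiff hQQ_sum₂, integral_sub hPP hPQ_sum, integral_const_mul,
    integral_const_mul, integral_finsetSum _ fun i _ => hPQ i,
    integral_finsetSum _ fun i _ => hQQ_sum i]
  simp_rw [integral_finsetSum _ fun j _ => hQQ _ j]

theorem setIntegral_Icc_indicator_Ioi {f : ℝ → ℝ} {a b c : ℝ} (hac : a ≤ c) (hcb : c ≤ b) :
    ∫ t in Icc a b, (Ioi c).indicator f t = ∫ t in c..b, f t := by
  have hs : Ioi c ∩ Icc a b = Ioc c b := by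
    ext t
    simp only [mem_inter_iff, mem_Ioi, mem_Icc, mem_Ioc]
    constructor
    · rintro ⟨hct, -, htb⟩; exact ⟨hct, htb⟩
    · rintro ⟨hct, htb⟩; exact ⟨hct, ⟨hac.trans hct.le, htb⟩⟩
  rw [integral_indicator measurableSet_Ioi, Measure.restrict_restrict measurableSet_Ioi, hs,
    intervalIntegral.integral_of_le hcb]

theorem self_mul_indicator_one (s : Set ℝ) (t : ℝ) :
    t * s.indicator 1 t = s.indicator (fun u => u) t := by
  simpa using (s.indicator_mul_right (fun u => u) 1 (i := t)).symm

theorem indicator_Ioi_one_mul_indicator_Ioi_one (a b t : ℝ) :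
    (Ioi a).indicator (1 : ℝ → ℝ) t * (Ioi b).indicator 1 t = (Ioi (max a b)).indicator 1 t := by
  rw [← Pi.mul_apply, ← inter_indicator_one, Ioi_inter_Ioi]

theorem setIntegral_Icc_zero_one_mul_self : ∫ t in Icc (0 : ℝ) 1, t * t = 1 / 3 := by
  rw [integral_Icc_eq_integral_Ioc, ← intervalIntegral.integral_of_le zero_le_one]
  simp_rw [← sq, integral_pow]
  norm_num

theorem setIntegral_Icc_zero_one_mul_indicator_Ioi {a : ℝ} (ha : a ∈ Icc (0 : ℝ) 1) :
    ∫ t in Icc (0 : ℝ) 1, t * (Ioi a).indicator 1 t = (1 - a ^ 2) / 2 := by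
  simp_rw [self_mul_indicator_one]
  rw [setIntegral_Icc_indicator_Ioi ha.1 ha.2, integral_id]
  ring

theorem setIntegral_Icc_zero_one_indicator_Ioi_mul {a b : ℝ} (ha : a ∈ Icc (0 : ℝ) 1)
    (hb : b ∈ Icc (0 : ℝ) 1) :
    ∫ t in Icc (0 : ℝ) 1, (Ioi a).indicator 1 t * (Ioi b).indicator 1 t = min (1 - a) (1 - b) := by
  simp_rw [indicator_Ioi_one_mul_indicator_Ioi_one]
  rw [setIntegral_Icc_indicator_Ioi (le_max_of_le_left ha.1) (max_le ha.2 hb.2), Pi.one_def,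
    intervalIntegral.integral_const, smul_eq_mul, mul_one, min_sub_sub_left]

theorem warnock_formula_general (d n : ℕ)
    (x : Fin n → Fin d → ℝ) (hx : ∀ i k, x i k ∈ Set.Ico (0:ℝ) 1) :
    (∫ y in Set.Icc (0 : Fin d → ℝ) 1,
      ((∏ k, y k) - (1 / n) * ∑ i, (if ∀ k, x i k ∈ Set.Ico 0 (y k) then (1:ℝ) else 0)) ^ 2)
    = (1/3 : ℝ) ^ d
      - (2 * (1/2 : ℝ) ^ d / n) * ∑ i, ∏ k, (1 - (x i k) ^ 2)
      + (1 / (n:ℝ) ^ 2) * ∑ i, ∑ j, ∏ k, min (1 - x i k) (1 - x j k) := by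
  have hx_Icc : ∀ i k, x i k ∈ Icc (0 : ℝ) 1 := fun i k => Ico_subset_Icc_self (hx i k)
  have hcount : ∀ i (y : Fin d → ℝ), (if ∀ k, x i k ∈ Ico 0 (y k) then (1:ℝ) else 0)
      = ∏ k, (Ioi (x i k)).indicator 1 (y k) := by
    intro i y
    simp [indicator_apply, Fintype.prod_boole, (hx i _).1]
  simp_rw [hcount]
  rw [integral_sub_mul_sum_sq (P := fun y : Fin d → ℝ => ∏ k, y k)
    (Q := fun i (y : Fin d → ℝ) => ∏ k, (Ioi (x i k)).indicator 1 (y k)) (1 / n) ?_ ?_ ?_]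
  · simp only [setIntegral_Icc_pi_prod_mul (fun _ t => t) (fun _ t => t),
      setIntegral_Icc_pi_prod_mul (fun _ t => t), setIntegral_Icc_pi_prod_mul, Pi.zero_apply,
      Pi.one_apply, setIntegral_Icc_zero_one_mul_self,
      setIntegral_Icc_zero_one_mul_indicator_Ioi (hx_Icc _ _),
      setIntegral_Icc_zero_one_indicator_Ioi_mul (hx_Icc _ _) (hx_Icc _ _), Finset.prod_const,
      Finset.card_univ, Fintype.card_fin, Finset.prod_div_distrib]
    rw [← Finset.sum_div, one_div_pow (2 : ℝ) d]
    ring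
  · exact integrableOn_Icc_pi_prod_mul fun _ =>
      (continuous_id.mul continuous_id).integrableOn_Icc
  · intro i
    refine integrableOn_Icc_pi_prod_mul (f := fun _ t => t) fun k => ?_
    simp_rw [self_mul_indicator_one]
    exact continuous_id.integrableOn_Icc.indicator measurableSet_Ioi
  · intro i j
    refine integrableOn_Icc_pi_prod_mul fun k => ?_
    simp_rw [indicator_Ioi_one_mul_indicator_Ioi_one]
    exact continuous_const.integrableOn_Icc.indicator measurableSet_Ioi

/-- Warnock's formula for the squared L2-star discrepancy. -/
theorem warnock_formula (d n : ℕ) (hn : 0 < n)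
    (x : Fin n → Fin d → ℝ) (hx : ∀ i k, x i k ∈ Set.Ico (0:ℝ) 1) :
    (∫ y in Set.Icc (0 : Fin d → ℝ) 1,
      ((∏ k, y k) - (1 / n) * ∑ i, (if ∀ k, x i k ∈ Set.Ico 0 (y k) then (1:ℝ) else 0)) ^ 2)
    = (1/3 : ℝ) ^ d
      - (2 * (1/2 : ℝ) ^ d / n) * ∑ i, ∏ k, (1 - (x i k) ^ 2)
      + (1 / (n:ℝ) ^ 2) * ∑ i, ∑ j, ∏ k, min (1 - x i k) (1 - x j k) :=
  warnock_formula_general d n x hx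
end

section
/- Let X = (x^(1),...,x^(n)) be a sequence in [0,1)^d. Then d*_∞(X) = max{ max_{y ∈ Γ̄(X)} δ(y,X), max_{y ∈ Γ(X)} δ̄(y,X) }, where δ(y,X) = V_y - A(y,X)/n and δ̄(y,X) = Ā(y,X)/n - V_y. -/
/-- Volume of the anchored box `[0,y)`. -/
def boxVol {d : ℕ} (y : Fin d → ℝ) : ℝ := ∏ j, y j

/-- Number of points of `X` in the half-open box `[0,y)`. -/
noncomputable def countOpen {n d : ℕ} (x : Fin n → Fin d → ℝ) (y : Fin d → ℝ) : ℕ :=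
  (Finset.univ.filter fun i => ∀ j, x i j ∈ Set.Ico 0 (y j)).card

/-- Number of points of `X` in the closed box `[0,y]`. -/
noncomputable def countClosed {n d : ℕ} (x : Fin n → Fin d → ℝ) (y : Fin d → ℝ) : ℕ :=
  (Finset.univ.filter fun i => ∀ j, x i j ∈ Set.Icc 0 (y j)).card

/-!
Moving a corner `y` of an anchored box up to the nearest grid value in each coordinate (with `1`
as the fallback) does not change which points lie in `[0,y)` and can only increase the volume,
so `δ` is maximised on `Γ̄(X)`. Moving `y` down to the nearest point coordinate does not change
which points lie in `[0,y]` and can only decrease the volume, so `δ̄` is maximised on `Γ(X)`;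
when some coordinate has no point coordinate below it, `[0,y]` is empty and `δ̄(y) ≤ 0 = δ(1)`.
-/

open Finset

lemma Finset.exists_mem_ge_forall_lt_iff {α : Type*} [LinearOrder α] (s : Finset α) {a : α}
    (h : ∃ c ∈ s, a ≤ c) : ∃ c ∈ s, a ≤ c ∧ ∀ b ∈ s, b < c ↔ b < a := by
  classical
  obtain ⟨c, hc, hac⟩ := h
  have hne : (s.filter (a ≤ ·)).Nonempty := ⟨c, mem_filter.2 ⟨hc, hac⟩⟩
  obtain ⟨hmem, hle⟩ := mem_filter.1 (min'_mem _ hne)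
  refine ⟨_, hmem, hle, fun b hb => ⟨fun hlt => ?_, fun hlt => hlt.trans_le hle⟩⟩
  exact not_le.1 fun hab => (min'_le _ b (mem_filter.2 ⟨hb, hab⟩)).not_gt hlt

lemma Finset.exists_mem_le_forall_le_iff {α : Type*} [LinearOrder α] (s : Finset α) {a : α}
    (h : ∃ c ∈ s, c ≤ a) : ∃ c ∈ s, c ≤ a ∧ ∀ b ∈ s, b ≤ c ↔ b ≤ a := by
  classical
  obtain ⟨c, hc, hca⟩ := h
  have hne : (s.filter (· ≤ a)).Nonempty := ⟨c, mem_filter.2 ⟨hc, hca⟩⟩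
  obtain ⟨hmem, hle⟩ := mem_filter.1 (max'_mem _ hne)
  exact ⟨_, hmem, hle, fun b hb =>
    ⟨fun hbc => hbc.trans hle, fun hba => le_max' _ b (mem_filter.2 ⟨hb, hba⟩)⟩⟩

section Discrepancy

variable {n d : ℕ} (x : Fin n → Fin d → ℝ)

/-- `δ(y,X)` -/
noncomputable def discOpen (y : Fin d → ℝ) : ℝ := boxVol y - (countOpen x y : ℝ) / n

/-- `δ̄(y,X)` -/
noncomputable def discClosed (y : Fin d → ℝ) : ℝ := (countClosed x y : ℝ) / n - boxVol y

/-- `Γ̄(X)` -/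
def gridBar : Set (Fin d → ℝ) := {y | ∀ j, (∃ i, y j = x i j) ∨ y j = 1}

/-- `Γ(X)` -/
def grid : Set (Fin d → ℝ) := {y | ∀ j, ∃ i, y j = x i j}

lemma boxVol_mono {y z : Fin d → ℝ} (h0 : 0 ≤ y) (h : y ≤ z) : boxVol y ≤ boxVol z :=
  prod_le_prod (fun j _ => h0 j) (fun j _ => h j)

lemma boxVol_nonneg {y : Fin d → ℝ} (h0 : 0 ≤ y) : 0 ≤ boxVol y :=
  prod_nonneg fun j _ => h0 j

lemma boxVol_le_one {y : Fin d → ℝ} (hy : y ∈ Set.Icc 0 1) : boxVol y ≤ 1 :=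
  prod_le_one (fun j _ => hy.1 j) (fun j _ => hy.2 j)

lemma countClosed_le (y : Fin d → ℝ) : countClosed x y ≤ n :=
  (card_filter_le _ _).trans_eq (card_fin n)

lemma countOpen_congr {y z : Fin d → ℝ} (h : ∀ i j, x i j < y j ↔ x i j < z j) :
    countOpen x y = countOpen x z := by
  unfold countOpen
  congr 1
  exact filter_congr fun i _ => forall_congr' fun j => and_congr_right fun _ => h i j

lemma countClosed_congr {y z : Fin d → ℝ} (h : ∀ i j, x i j ≤ y j ↔ x i j ≤ z j) :
    countClosed x y = countClosed x z := by
  unfold countClosed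
  congr 1
  exact filter_congr fun i _ => forall_congr' fun j => and_congr_right fun _ => h i j

lemma countClosed_eq_zero {y : Fin d → ℝ} (h : ∃ j, ∀ i, y j < x i j) :
    countClosed x y = 0 := by
  obtain ⟨j, hj⟩ := h
  rw [countClosed, card_eq_zero, filter_eq_empty_iff]
  exact fun i _ hi => (hj i).not_ge (hi j).2

lemma countOpen_one (hx : ∀ i j, x i j ∈ Set.Ico 0 1) : countOpen x 1 = n := by
  simp only [countOpen, Pi.one_apply, filter_true_of_mem fun i _ j => hx i j, card_univ,
    Fintype.card_fin]

lemma discOpen_one (hn : n ≠ 0) (hx : ∀ i j, x i j ∈ Set.Ico 0 1) : discOpen x 1 = 0 := by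
  simp [discOpen, boxVol, countOpen_one x hx, hn]

lemma discOpen_le_one {y : Fin d → ℝ} (hy : y ∈ Set.Icc 0 1) : discOpen x y ≤ 1 := by
  have : 0 ≤ (countOpen x y : ℝ) / n := by positivity
  unfold discOpen
  linarith [boxVol_le_one hy]

lemma discClosed_le_one {y : Fin d → ℝ} (hy : 0 ≤ y) : discClosed x y ≤ 1 := by
  have : (countClosed x y : ℝ) / n ≤ 1 :=
    div_le_one_of_le₀ (by exact_mod_cast countClosed_le x y) n.cast_nonneg
  unfold discClosed
  linarith [boxVol_nonneg hy]

lemma grid_subset_gridBar : grid x ⊆ gridBar x := fun _ hy j => Or.inl (hy j)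

lemma one_mem_gridBar : (1 : Fin d → ℝ) ∈ gridBar x := fun _ => Or.inr rfl

lemma gridBar_subset_Icc (hx : ∀ i j, x i j ∈ Set.Ico 0 1) : gridBar x ⊆ Set.Icc 0 1 := by
  intro y hy
  have h01 : ∀ j, 0 ≤ y j ∧ y j ≤ 1 := fun j => by
    rcases hy j with ⟨i, hi⟩ | hi
    · rw [hi]; exact ⟨(hx i j).1, (hx i j).2.le⟩
    · rw [hi]; exact ⟨zero_le_one, le_rfl⟩
  exact ⟨fun j => (h01 j).1, fun j => (h01 j).2⟩

lemma exists_mem_gridBar_countOpen_eq {y : Fin d → ℝ} (hy : y ≤ 1) :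
    ∃ z ∈ gridBar x, y ≤ z ∧ countOpen x z = countOpen x y := by
  classical
  choose z hz hyz hlt using fun j =>
    (insert 1 (univ.image (x · j))).exists_mem_ge_forall_lt_iff ⟨1, mem_insert_self _ _, hy j⟩
  refine ⟨z, fun j => ?_, hyz,
    countOpen_congr x fun i j => hlt j _ (mem_insert_of_mem (mem_image_of_mem _ (mem_univ i)))⟩
  rcases mem_insert.1 (hz j) with h | h
  · exact Or.inr h
  · obtain ⟨i, -, hi⟩ := mem_image.1 h
    exact Or.inl ⟨i, hi.symm⟩

lemma exists_mem_grid_countClosed_eq {y : Fin d → ℝ} (h : ∀ j, ∃ i, x i j ≤ y j) :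
    ∃ z ∈ grid x, z ≤ y ∧ countClosed x z = countClosed x y := by
  classical
  choose z hz hzy hle using fun j =>
    (univ.image (x · j)).exists_mem_le_forall_le_iff <|
      let ⟨i, hi⟩ := h j; ⟨x i j, mem_image_of_mem _ (mem_univ i), hi⟩
  refine ⟨z, fun j => ?_, hzy,
    countClosed_congr x fun i j => hle j _ (mem_image_of_mem _ (mem_univ i))⟩
  obtain ⟨i, -, hi⟩ := mem_image.1 (hz j)
  exact ⟨i, hi.symm⟩

lemma exists_mem_gridBar_discOpen_le {y : Fin d → ℝ} (hy : y ∈ Set.Icc 0 1) :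
    ∃ z ∈ gridBar x, discOpen x y ≤ discOpen x z := by
  obtain ⟨z, hz, hyz, hcount⟩ := exists_mem_gridBar_countOpen_eq x hy.2
  refine ⟨z, hz, ?_⟩
  rw [discOpen, discOpen, hcount]
  linarith [boxVol_mono hy.1 hyz]

lemma exists_mem_grid_discClosed_le_or_nonpos (hx0 : ∀ i j, 0 ≤ x i j) {y : Fin d → ℝ}
    (hy : 0 ≤ y) :
    (∃ z ∈ grid x, discClosed x y ≤ discClosed x z) ∨ discClosed x y ≤ 0 := by
  by_cases h : ∀ j, ∃ i, x i j ≤ y j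
  · obtain ⟨z, hz, hzy, hcount⟩ := exists_mem_grid_countClosed_eq x h
    refine Or.inl ⟨z, hz, ?_⟩
    rw [discClosed, discClosed, hcount]
    have hz0 : 0 ≤ z := fun j => let ⟨i, hi⟩ := hz j; hi ▸ hx0 i j
    linarith [boxVol_mono hz0 hzy]
  · push Not at h
    right
    simp only [discClosed, countClosed_eq_zero x h, CharP.cast_eq_zero, zero_div, zero_sub,
      neg_nonpos]
    exact boxVol_nonneg hy

end Discrepancy

/-- The star discrepancy is attained on the grids `Γ̄(X)` and `Γ(X)` induced by `X`:
`d*_∞(X) = max{max_{y∈Γ̄(X)} δ(y,X), max_{y∈Γ(X)} δ̄(y,X)}`. -/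
theorem star_disc_grid (d n : ℕ) (hn : 0 < n)
    (x : Fin n → Fin d → ℝ) (hx : ∀ i j, x i j ∈ Set.Ico (0:ℝ) 1) :
    sSup {t : ℝ | ∃ y ∈ Set.Icc (0 : Fin d → ℝ) 1,
        t = max (boxVol y - (countOpen x y : ℝ) / n)
                ((countClosed x y : ℝ) / n - boxVol y)}
    = max
      (sSup {t : ℝ | ∃ y : Fin d → ℝ, (∀ j, (∃ i, y j = x i j) ∨ y j = 1) ∧
          t = boxVol y - (countOpen x y : ℝ) / n})
      (sSup {t : ℝ | ∃ y : Fin d → ℝ, (∀ j, ∃ i, y j = x i j) ∧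
          t = (countClosed x y : ℝ) / n - boxVol y}) := by
  have hcube := gridBar_subset_Icc x hx
  let i₀ : Fin n := ⟨0, hn⟩
  refine (csSup_eq_csSup_of_forall_exists_le ?_ ?_).trans (csSup_union ?_ ?_ ?_ ?_)
  · rintro _ ⟨y, hy, rfl⟩
    change ∃ b ∈ _, max (discOpen x y) (discClosed x y) ≤ b
    rcases max_choice (discOpen x y) (discClosed x y) with h | h <;> rw [h]
    · obtain ⟨z, hz, hyz⟩ := exists_mem_gridBar_discOpen_le x hy
      exact ⟨_, Or.inl ⟨z, hz, rfl⟩, hyz⟩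
    · rcases exists_mem_grid_discClosed_le_or_nonpos x (fun i j => (hx i j).1) hy.1 with
        ⟨z, hz, hyz⟩ | hle
      · exact ⟨_, Or.inr ⟨z, hz, rfl⟩, hyz⟩
      · exact ⟨_, Or.inl ⟨1, one_mem_gridBar x, rfl⟩,
          hle.trans (discOpen_one x hn.ne' hx).ge⟩
  · rintro _ (⟨y, hy, rfl⟩ | ⟨y, hy, rfl⟩)
    · exact ⟨_, ⟨y, hcube hy, rfl⟩, le_max_left _ _⟩
    · exact ⟨_, ⟨y, hcube (grid_subset_gridBar x hy), rfl⟩, le_max_right _ _⟩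
  · exact ⟨1, by rintro _ ⟨y, hy, rfl⟩; exact discOpen_le_one x (hcube hy)⟩
  · exact ⟨_, 1, one_mem_gridBar x, rfl⟩
  · exact ⟨1, by
      rintro _ ⟨y, hy, rfl⟩
      exact discClosed_le_one x (hcube (grid_subset_gridBar x hy)).1⟩
  · exact ⟨_, x i₀, fun _ => ⟨i₀, rfl⟩, rfl⟩
end

section
/- Let G = (V,E) be a graph with vertex set V = {1,...,n}, and let α, β ∈ [0,1) with β < α^n. Define points x^(i) ∈ [0,1)^n for i = 1,...,n by x^(i)_j = α if {i,j} ∈ E or i = j, and x^(i)_j = β otherwise, and let X = (x^(1),...,x^(n)). Then for every m ∈ {1,...,n}: G has a dominating set M ⊆ V with |M| ≤ m if and only if there exists y ∈ Γ̄(X) with A(y,X) = 0 and V_y ≥ α^m. -/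
/-!
Every coordinate of a grid corner is `α`, `β` or `1`, and a corner using `β` has volume at
most `β < α ^ m`. So a large empty box has corner `α` on some set `M` and `1` elsewhere, and
its volume is `α ^ |M|`. Point `x⁽ⁱ⁾` escapes that box exactly when some `j ∈ M` has
`x⁽ⁱ⁾_j = α`, i.e. when `j` equals or is adjacent to `i`: the box is empty iff `M` dominates.
-/

namespace SimpleGraph

variable {V : Type*} (G : SimpleGraph V)

def IsDominatingSet (M : Finset V) : Prop :=
  ∀ v, v ∉ M → ∃ w ∈ M, G.Adj v w

/-- Row `i` is the point `x⁽ⁱ⁾` of the reduction. -/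
def boxPoints [DecidableEq V] [DecidableRel G.Adj] (α β : ℝ) (i j : V) : ℝ :=
  if G.Adj i j ∨ i = j then α else β

lemma isDominatingSet_iff_forall_exists_adj_or_eq {M : Finset V} :
    G.IsDominatingSet M ↔ ∀ v, ∃ w ∈ M, G.Adj v w ∨ v = w := by
  refine forall_congr' fun v => ?_
  by_cases hv : v ∈ M
  · simpa [hv] using ⟨v, hv, Or.inr rfl⟩
  · simp only [hv, not_false_eq_true, forall_const]
    constructor
    · rintro ⟨w, hw, hvw⟩
      exact ⟨w, hw, .inl hvw⟩
    · rintro ⟨w, hw, hvw | rfl⟩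
      exacts [⟨w, hw, hvw⟩, absurd hw hv]

end SimpleGraph

section Boxes

variable {ι V : Type*}

def IsEmptyBox (x : ι → V → ℝ) (y : V → ℝ) : Prop :=
  ∀ i, ¬ ∀ j, x i j ∈ Set.Ico 0 (y j)

/-- `y` lies in the grid `Γ̄(x)`. -/
def IsGridCorner (x : ι → V → ℝ) (y : V → ℝ) : Prop :=
  ∀ j, (∃ i, y j = x i j) ∨ y j = 1

lemma prod_le_apply_of_mem_Icc [Fintype V] {y : V → ℝ} (hy : ∀ k, y k ∈ Set.Icc 0 1) (j : V) :
    ∏ k, y k ≤ y j := by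
  classical
  simpa using Finset.prod_le_prod_of_subset_of_le_one (Finset.subset_univ {j})
    (fun k _ => (hy k).1) (fun k _ _ => (hy k).2)

end Boxes

section Reduction

variable {V : Type*} [DecidableEq V] {G : SimpleGraph V} [DecidableRel G.Adj]
  {α β : ℝ}

def indicatorCorner (α : ℝ) (M : Finset V) (j : V) : ℝ :=
  if j ∈ M then α else 1

lemma prod_indicatorCorner [Fintype V] (α : ℝ) (M : Finset V) :
    ∏ j, indicatorCorner α M j = α ^ M.card := by
  simp only [indicatorCorner]
  rw [Finset.prod_ite_mem, Finset.univ_inter, Finset.prod_const]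

lemma isGridCorner_indicatorCorner (α β : ℝ) (M : Finset V) :
    IsGridCorner (G.boxPoints α β) (indicatorCorner α M) := by
  intro j
  by_cases hj : j ∈ M
  · exact .inl ⟨j, by simp [indicatorCorner, SimpleGraph.boxPoints, hj]⟩
  · exact .inr (if_neg hj)

lemma isEmptyBox_indicatorCorner_iff (hβ0 : 0 ≤ β) (hβα : β < α) (hα1 : α < 1) (M : Finset V) :
    IsEmptyBox (G.boxPoints α β) (indicatorCorner α M) ↔ G.IsDominatingSet M := by
  have hα0 : 0 ≤ α := hβ0.trans hβα.le
  have mem_box : ∀ i j, G.boxPoints α β i j ∈ Set.Ico 0 (indicatorCorner α M j) ↔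
      (j ∈ M → ¬ (G.Adj i j ∨ i = j)) := fun i j => by
    by_cases hj : j ∈ M <;> by_cases hij : G.Adj i j ∨ i = j <;>
      simp [SimpleGraph.boxPoints, indicatorCorner, hj, hij, hα0, hβ0, hβα, hα1, hβα.trans hα1]
  simp only [IsEmptyBox, mem_box, ← not_exists, exists_prop, not_not,
    G.isDominatingSet_iff_forall_exists_adj_or_eq]

lemma exists_eq_indicatorCorner [Fintype V] (hβ0 : 0 ≤ β) (hβα : β ≤ α) (hα1 : α ≤ 1)
    {y : V → ℝ} (hgrid : IsGridCorner (G.boxPoints α β) y) (hvol : β < ∏ j, y j) :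
    ∃ M : Finset V, y = indicatorCorner α M := by
  have hy : ∀ j, y j = α ∨ y j = β ∨ y j = 1 := fun j => by
    rcases hgrid j with ⟨i, hi⟩ | h1
    · unfold SimpleGraph.boxPoints at hi; split_ifs at hi <;> simp [hi]
    · simp [h1]
  have hIcc : ∀ j, y j ∈ Set.Icc 0 1 := fun j => by
    rcases hy j with h | h | h <;> rw [h] <;> constructor <;> linarith
  have hne : ∀ j, y j ≠ β := fun j h =>
    (prod_le_apply_of_mem_Icc hIcc j).not_gt (h ▸ hvol)
  refine ⟨Finset.univ.filter (y · = α), funext fun j => ?_⟩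
  rcases hy j with h | h | h
  · simp [indicatorCorner, h]
  · exact absurd h (hne j)
  · by_cases hα : y j = α <;> simp [indicatorCorner, hα, h]

end Reduction

theorem dominating_set_iff_empty_box_general (n : ℕ) (hn : 0 < n) (G : SimpleGraph (Fin n))
    [DecidableRel G.Adj] (α β : ℝ) (hα : α ∈ Set.Ico (0:ℝ) 1) (hβ : β ∈ Set.Ico (0:ℝ) 1)
    (hβα : β < α ^ n) (m : ℕ) (hm2 : m ≤ n)
    (x : Fin n → Fin n → ℝ)
    (hxdef : ∀ i j, x i j = if G.Adj i j ∨ i = j then α else β) :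
    (∃ M : Finset (Fin n), M.card ≤ m ∧ ∀ v, v ∉ M → ∃ w ∈ M, G.Adj v w)
    ↔ ∃ y : Fin n → ℝ,
        (∀ j, (∃ i, y j = x i j) ∨ y j = 1) ∧
        (∀ i, ¬ (∀ j, x i j ∈ Set.Ico 0 (y j))) ∧
        α ^ m ≤ ∏ j, y j := by
  obtain rfl : x = G.boxPoints α β := funext fun i => funext (hxdef i)
  obtain ⟨hα0, hα1⟩ := hα
  have hαpos : 0 < α := hα0.lt_of_ne fun h => by
    rw [← h, zero_pow hn.ne'] at hβα
    exact hβα.not_ge hβ.1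
  have hβα' : β < α := hβα.trans_le (pow_le_of_le_one hα0 hα1.le hn.ne')
  have hβαm : β < α ^ m := hβα.trans_le (pow_le_pow_of_le_one hα0 hα1.le hm2)
  have hpow_le : ∀ k, α ^ m ≤ α ^ k ↔ k ≤ m := fun k => pow_le_pow_iff_right_of_lt_one₀ hαpos hα1
  constructor
  · rintro ⟨M, hcard, hdom⟩
    refine ⟨indicatorCorner α M, isGridCorner_indicatorCorner α β M,
      (isEmptyBox_indicatorCorner_iff hβ.1 hβα' hα1 M).2 hdom, ?_⟩
    rwa [prod_indicatorCorner, hpow_le]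
  · rintro ⟨y, hgrid, hempty, hvol⟩
    obtain ⟨M, rfl⟩ := exists_eq_indicatorCorner hβ.1 hβα'.le hα1.le hgrid (hβαm.trans_le hvol)
    rw [prod_indicatorCorner, hpow_le] at hvol
    exact ⟨M, hvol, (isEmptyBox_indicatorCorner_iff hβ.1 hβα' hα1 M).1 hempty⟩

/-- The reduction from `Dominating Set` to `Empty Half-Open Box`: the graph `G` has a
dominating set of size at most `m` if and only if the derived point set admits an empty
anchored box with grid corner of volume at least `α^m`. -/
theorem dominating_set_iff_empty_box (n : ℕ) (hn : 0 < n) (G : SimpleGraph (Fin n))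
    [DecidableRel G.Adj] (α β : ℝ) (hα : α ∈ Set.Ico (0:ℝ) 1) (hβ : β ∈ Set.Ico (0:ℝ) 1)
    (hβα : β < α ^ n) (m : ℕ) (hm1 : 1 ≤ m) (hm2 : m ≤ n)
    (x : Fin n → Fin n → ℝ)
    (hxdef : ∀ i j, x i j = if G.Adj i j ∨ i = j then α else β) :
    (∃ M : Finset (Fin n), M.card ≤ m ∧ ∀ v, v ∉ M → ∃ w ∈ M, G.Adj v w)
    ↔ ∃ y : Fin n → ℝ,
        (∀ j, (∃ i, y j = x i j) ∨ y j = 1) ∧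
        (∀ i, ¬ (∀ j, x i j ∈ Set.Ico 0 (y j))) ∧
        α ^ m ≤ ∏ j, y j :=
  dominating_set_iff_empty_box_general n hn G α β hα hβ hβα m hm2 x hxdef
end

section
/- Let p be an even positive integer, let γ_1 ≥ ... ≥ γ_d ≥ 0 with product weights γ_u = Π_{j∈u} γ_j, and let X = (x^(1),...,x^(n)) be a sequence in [0,1)^d. Then (d*_{p,γ}(X))^p = Σ_{ℓ=0}^p binom(p,ℓ) (-1/n)^ℓ Σ_{(i_1,...,i_ℓ) ∈ {1,...,n}^ℓ} Π_{j=1}^d ( 1 + γ_j · (1 - max_{1≤k≤ℓ} (x^(i_k)_j)^{p-ℓ+1}) / (p-ℓ+1) ), where for ℓ = 0 the inner max over an empty set is taken to be 0. -/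
/-! Expand the `p`-th power binomially and the `ℓ`-th power of the counting sum as a sum over
`ℓ`-tuples of points. Each resulting term is a product over the coordinates `j ∈ u` of factors
`y_j ^ (p - ℓ) · 1{max_k x_j^(i_k) < y_j}`, so by Fubini its integral is a product of
one-dimensional integrals `∫₀¹ t ^ (p - ℓ) · 1{t > s} dt = (1 - s ^ (p - ℓ + 1)) / (p - ℓ + 1)`.
The term `u = ∅` vanishes because its integrand is `(1 - n / n) ^ p = 0`, so the sum may run over
all `u`, and then `∑_u ∏_{j ∈ u} γ_j C_j = ∏_j (1 + γ_j C_j)`. -/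

open MeasureTheory Finset

/-- For empty `ι` the supremum is the junk value `0`, whence `0 < t`. -/
lemma forall_lt_iff_ciSup_lt_of_pos {ι : Type*} [Finite ι] (z : ι → ℝ) {t : ℝ} (ht : 0 < t) :
    (∀ k, z k < t) ↔ ⨆ k, z k < t := by
  cases isEmpty_or_nonempty ι
  · simp [ht]
  · obtain ⟨k₀, hk₀⟩ := exists_eq_ciSup_of_finite (f := z)
    exact ⟨fun h => hk₀ ▸ h k₀, fun h k => (le_ciSup (Set.finite_range z).bddAbove k).trans_lt h⟩

section OneDimensional

variable {ι : Type*} [Finite ι] (q : ℕ) (z : ι → ℝ) [∀ t, Decidable (∀ k, z k < t)]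

lemma integrableOn_Icc_pow_mul_boole_forall_lt (a b : ℝ) :
    IntegrableOn (fun t : ℝ => t ^ q * if ∀ k, z k < t then 1 else 0) (Set.Icc a b) := by
  have hS : MeasurableSet {t : ℝ | ∀ k, z k < t} := by
    simp only [Set.ofPred_forall]
    exact MeasurableSet.iInter fun k => measurableSet_Ioi
  refine (((continuous_pow q).integrableOn_Icc (μ := volume)).indicator hS).congr_fun
    (fun t _ => ?_) measurableSet_Icc
  simp [Set.indicator_apply]

lemma integral_Icc_pow_mul_boole_forall_lt (hz : ∀ k, z k ∈ Set.Icc (0 : ℝ) 1) :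
    ∫ t in Set.Icc (0 : ℝ) 1, t ^ q * (if ∀ k, z k < t then 1 else 0)
      = (1 - ⨆ k, z k ^ (q + 1)) / (q + 1) := by
  set s := ⨆ k, z k
  have hs0 : 0 ≤ s := Real.iSup_nonneg fun k => (hz k).1
  have hs1 : s ≤ 1 := Real.iSup_le (fun k => (hz k).2) zero_le_one
  calc ∫ t in Set.Icc (0 : ℝ) 1, t ^ q * (if ∀ k, z k < t then 1 else 0)
      = ∫ t in Set.Ioc (0 : ℝ) 1, (Set.Ioi s).indicator (· ^ q) t := by
        rw [integral_Icc_eq_integral_Ioc]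
        refine setIntegral_congr_fun measurableSet_Ioc fun t ht => ?_
        simp [Set.indicator_apply, forall_lt_iff_ciSup_lt_of_pos z ht.1, s]
    _ = ∫ t in s..1, t ^ q := by
        rw [setIntegral_indicator measurableSet_Ioi, Set.Ioc_inter_Ioi, max_eq_right hs0,
          intervalIntegral.integral_of_le hs1]
    _ = (1 - ⨆ k, z k ^ (q + 1)) / (q + 1) := by
        rw [integral_pow, Real.iSup_pow_of_ne_zero (fun k => (hz k).1) q.succ_ne_zero, one_pow]

end OneDimensional

lemma prod_apply_eq_prod_ite_one_apply {ι E M : Type*} [Fintype ι] [DecidableEq ι] [CommMonoid M]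
    (u : Finset ι) (f : ι → E → M) (y : ι → E) :
    ∏ j ∈ u, f j (y j) = ∏ j, (if j ∈ u then f j else 1) (y j) := by
  rw [← Fintype.prod_ite_mem]
  exact prod_congr rfl fun j _ => by split_ifs <;> rfl

section ProductMeasure

variable {ι E 𝕜 : Type*} [Fintype ι] [DecidableEq ι] [RCLike 𝕜] [MeasurableSpace E]
  {μ : ι → Measure E} [∀ j, IsProbabilityMeasure (μ j)]

lemma integrable_pi_finset_prod (u : Finset ι) {f : ι → E → 𝕜}
    (hf : ∀ j ∈ u, Integrable (f j) (μ j)) :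
    Integrable (fun y => ∏ j ∈ u, f j (y j)) (Measure.pi μ) := by
  simp_rw [prod_apply_eq_prod_ite_one_apply u f]
  refine Integrable.fintype_prod fun j => ?_
  split_ifs with hj
  exacts [hf j hj, integrable_const 1]

lemma integral_pi_finset_prod (u : Finset ι) (f : ι → E → 𝕜) :
    ∫ y, ∏ j ∈ u, f j (y j) ∂Measure.pi μ = ∏ j ∈ u, ∫ t, f j t ∂μ j := by
  simp_rw [prod_apply_eq_prod_ite_one_apply u f]
  rw [integral_fintype_prod_eq_prod, ← Fintype.prod_ite_mem u]
  exact prod_congr rfl fun j _ => by split_ifs <;> simp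

end ProductMeasure

lemma volume_restrict_Icc_eq_pi {ι : Type*} [Fintype ι] (a b : ι → ℝ) :
    (volume : Measure (ι → ℝ)).restrict (Set.Icc a b)
      = Measure.pi fun j => volume.restrict (Set.Icc (a j) (b j)) := by
  rw [← Set.pi_univ_Icc, volume_pi, Measure.restrict_pi_pi]

lemma pow_prod_sub_mul_sum_boole {R ι κ : Type*} [CommRing R] [Fintype ι] (u : Finset κ)
    (a : κ → R) (c : R) (P : ι → κ → Prop) [∀ i j, Decidable (P i j)]
    [∀ i, Decidable (∀ j ∈ u, P i j)] (p : ℕ) :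
    (∏ j ∈ u, a j - c * ∑ i, if ∀ j ∈ u, P i j then 1 else 0) ^ p
      = ∑ ℓ ∈ range (p + 1), p.choose ℓ * (-c) ^ ℓ *
          ∑ ν : Fin ℓ → ι, ∏ j ∈ u, a j ^ (p - ℓ) * if ∀ k, P (ν k) j then 1 else 0 := by
  rw [sub_eq_neg_add, ← neg_mul, add_pow]
  refine sum_congr rfl fun ℓ _ => ?_
  rw [mul_pow, Fintype.sum_pow, mul_sum, sum_mul, sum_mul, mul_sum]
  refine sum_congr rfl fun ν _ => ?_
  have hswap : (∀ k, ∀ j ∈ u, P (ν k) j) ↔ ∀ j ∈ u, ∀ k, P (ν k) j :=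
    ⟨fun h j hj k => h k j hj, fun h k j hj => h j hj k⟩
  rw [prod_mul_distrib, prod_pow, Fintype.prod_boole, prod_boole]
  simp only [hswap]
  ring

lemma setIntegral_unitCube_pow_localDiscrepancy {ι κ : Type*} [Fintype ι] [Fintype κ]
    [DecidableEq κ] (x : ι → κ → ℝ) (hx : ∀ i j, x i j ∈ Set.Icc (0 : ℝ) 1) (u : Finset κ)
    [∀ (y : κ → ℝ) i, Decidable (∀ j ∈ u, x i j ∈ Set.Ico 0 (y j))] (c : ℝ) (p : ℕ) :
    ∫ y in Set.Icc (0 : κ → ℝ) 1,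
        (∏ j ∈ u, y j - c * ∑ i, if ∀ j ∈ u, x i j ∈ Set.Ico 0 (y j) then 1 else 0) ^ p
      = ∑ ℓ ∈ range (p + 1), p.choose ℓ * (-c) ^ ℓ *
          ∑ ν : Fin ℓ → ι, ∏ j ∈ u, (1 - ⨆ k, x (ν k) j ^ (p - ℓ + 1)) / (p - ℓ + 1) := by
  have : IsProbabilityMeasure (volume.restrict (Set.Icc (0 : ℝ) 1)) := ⟨by simp⟩
  set μ : Measure (κ → ℝ) := Measure.pi fun _ => volume.restrict (Set.Icc (0 : ℝ) 1)
  set g : (ℓ : ℕ) → (Fin ℓ → ι) → κ → ℝ → ℝ := fun ℓ ν j t =>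
    t ^ (p - ℓ) * if ∀ k, x (ν k) j < t then 1 else 0
  have hg : ∀ ℓ ν, Integrable (fun y : κ → ℝ => ∏ j ∈ u, g ℓ ν j (y j)) μ := fun ℓ ν =>
    integrable_pi_finset_prod u fun j _ =>
      (integrableOn_Icc_pow_mul_boole_forall_lt (p - ℓ) (fun k => x (ν k) j) 0 1).integrable
  have hx0 : ∀ i j, 0 ≤ x i j := fun i j => (hx i j).1
  simp only [Set.mem_Ico, hx0, true_and]
  rw [volume_restrict_Icc_eq_pi]
  simp only [Pi.zero_apply, Pi.one_apply]
  rw [integral_congr_ae (ae_of_all _ fun y =>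
      pow_prod_sub_mul_sum_boole u y c (fun i j => x i j < y j) p),
    integral_finsetSum _ fun ℓ _ => (integrable_finsetSum _ fun ν _ => hg ℓ ν).const_mul _]
  refine sum_congr rfl fun ℓ hℓ => ?_
  rw [integral_const_mul, integral_finsetSum _ fun ν _ => hg ℓ ν]
  congr 1
  refine sum_congr rfl fun ν _ => ?_
  rw [integral_pi_finset_prod u (g ℓ ν)]
  refine prod_congr rfl fun j _ => ?_
  rw [integral_Icc_pow_mul_boole_forall_lt _ _ fun k => hx (ν k) j,
    Nat.cast_sub (Nat.lt_succ_iff.mp (mem_range.mp hℓ))]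

theorem leobacher_pillichshammer_general (d n p : ℕ) (hn : 0 < n)
    (hppos : 0 < p)
    (γ : Fin d → ℝ)
    (x : Fin n → Fin d → ℝ) (hx : ∀ i k, x i k ∈ Set.Ico (0:ℝ) 1) :
    (∑ u ∈ (Finset.univ : Finset (Fin d)).powerset.erase ∅,
      (∏ j ∈ u, γ j) *
        ∫ y in Set.Icc (0 : Fin d → ℝ) 1,
          ((∏ j ∈ u, y j)
            - (1 / n) * ∑ i, (if ∀ j ∈ u, x i j ∈ Set.Ico 0 (y j) then (1:ℝ) else 0)) ^ p)
    = ∑ ℓ ∈ Finset.range (p + 1), (p.choose ℓ : ℝ) * (-(1 / n)) ^ ℓ *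
        ∑ ι : Fin ℓ → Fin n, ∏ j,
          (1 + γ j * (1 - ⨆ k : Fin ℓ, (x (ι k) j) ^ (p - ℓ + 1)) / (p - ℓ + 1)) := by
  have hn' : (n : ℝ) ≠ 0 := by positivity
  rw [sum_erase _ (by simp [hn', hppos.ne'])]
  simp_rw [setIntegral_unitCube_pow_localDiscrepancy x
      (fun i k => Set.Ico_subset_Icc_self (hx i k)),
    mul_div_assoc, prod_one_add, prod_mul_distrib, mul_sum]
  rw [sum_comm]
  refine sum_congr rfl fun ℓ _ => ?_
  rw [sum_comm]
  exact sum_congr rfl fun ν _ => sum_congr rfl fun u _ => by ring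

/-- The Leobacher–Pillichshammer formula for the weighted `L_p`-star discrepancy with
product weights, for even positive integers `p`. -/
theorem leobacher_pillichshammer (d n p : ℕ) (hn : 0 < n)
    (hp : Even p) (hppos : 0 < p)
    (γ : Fin d → ℝ) (hγmono : Antitone γ) (hγ0 : ∀ j, 0 ≤ γ j)
    (x : Fin n → Fin d → ℝ) (hx : ∀ i k, x i k ∈ Set.Ico (0:ℝ) 1) :
    (∑ u ∈ (Finset.univ : Finset (Fin d)).powerset.erase ∅,
      (∏ j ∈ u, γ j) *
        ∫ y in Set.Icc (0 : Fin d → ℝ) 1,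
          ((∏ j ∈ u, y j)
            - (1 / n) * ∑ i, (if ∀ j ∈ u, x i j ∈ Set.Ico 0 (y j) then (1:ℝ) else 0)) ^ p)
    = ∑ ℓ ∈ Finset.range (p + 1), (p.choose ℓ : ℝ) * (-(1 / n)) ^ ℓ *
        ∑ ι : Fin ℓ → Fin n, ∏ j,
          (1 + γ j * (1 - ⨆ k : Fin ℓ, (x (ι k) j) ^ (p - ℓ + 1)) / (p - ℓ + 1)) :=
  leobacher_pillichshammer_general d n p hn hppos γ x hx
end
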